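/- arXiv:2209.01783 — 2 statements merged into one kernel-verified Lean document; each statement's English description precedes it below -/
import Mathlib

section
/- For every Λ > 0 and every real t ≠ 0, the integral ∫_{−1/Λ}^{1/Λ} e^{ist} (|s|/2 − 1/(2Λ)) ds equals (cos(t/Λ) − 1)/t². Consequently, the Fourier transform of the cutoff-regularized one-dimensional fundamental solution −|s|_Λ/2 equals cos(t/Λ)/t² as a tempered distribution, i.e. the regularization multiplies the momentum-space Green's function 1/t² by ρ(t/Λ) = cos(t/Λ). -/
/-!
Since the weight `|s|/2 - 1/(2Λ)` is even, the sine part of `e^{ist}` integrates to zero and the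
integral is `2 ∫₀^{1/Λ} cos(st) (s - 1/Λ)/2 ds`. With `a = 1/Λ`, an antiderivative of
`cos(st) (s - a)` is `(s - a) sin(st)/t + cos(st)/t²`, whose increment over `[0, a]` is
`(cos(at) - 1)/t²`.
-/

open Complex MeasureTheory

theorem intervalIntegral.integral_symm_eq_integral_add_comp_neg {E : Type*}
    [NormedAddCommGroup E] [NormedSpace ℝ E] {f : ℝ → E} {a : ℝ}
    (hf : IntervalIntegrable f volume (-a) a) :
    ∫ x in -a..a, f x = ∫ x in 0..a, (f x + f (-x)) := by
  have h0 : (0 : ℝ) ∈ Set.uIcc (-a) a := by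
    rcases le_total 0 a with ha | ha <;> simp [ha]
  have hleft : IntervalIntegrable f volume (-a) 0 := hf.mono_set (Set.uIcc_subset_uIcc_left h0)
  have hright : IntervalIntegrable f volume 0 a := hf.mono_set (Set.uIcc_subset_uIcc_right h0)
  have hneg : IntervalIntegrable (fun x => f (-x)) volume 0 a := by
    simpa using ((IntervalIntegrable.iff_comp_neg).mp hleft).symm
  rw [← intervalIntegral.integral_add_adjacent_intervals hleft hright,
    intervalIntegral.integral_add hright hneg, intervalIntegral.integral_comp_neg, neg_zero,
    add_comm]

theorem integral_cexp_mul_ofReal_of_even {g : ℝ → ℝ} {a : ℝ}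
    (hg : IntervalIntegrable g volume (-a) a) (heven : ∀ s, g (-s) = g s) (t : ℝ) :
    ∫ s in -a..a, exp (I * s * t) * g s = ((2 * ∫ s in 0..a, Real.cos (s * t) * g s : ℝ) : ℂ) := by
  have hint : IntervalIntegrable (fun s : ℝ => exp (I * s * t) * g s) volume (-a) a :=
    IntervalIntegrable.continuousOn_mul ⟨hg.1.ofReal, hg.2.ofReal⟩ (by fun_prop)
  rw [intervalIntegral.integral_symm_eq_integral_add_comp_neg hint,
    ← intervalIntegral.integral_const_mul, ← intervalIntegral.integral_ofReal]
  congr 1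
  ext s
  rw [heven, ← add_mul, ofReal_mul, ofReal_mul, ofReal_cos, Complex.cos]
  push_cast
  ring_nf

theorem integral_cos_mul_mul_sub (a : ℝ) {t : ℝ} (ht : t ≠ 0) :
    ∫ s in 0..a, Real.cos (s * t) * (s - a) = (Real.cos (a * t) - 1) / t ^ 2 := by
  have hderiv (s : ℝ) : HasDerivAt (fun s => (s - a) * Real.sin (s * t) / t + Real.cos (s * t) / t ^ 2)
      (Real.cos (s * t) * (s - a)) s := by
    have hsin := (hasDerivAt_mul_const t).sin (x := s)
    have hcos := (hasDerivAt_mul_const t).cos (x := s)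
    refine ((((hasDerivAt_id' s).sub_const a).mul hsin).div_const t |>.add
      (hcos.div_const (t ^ 2))).congr_deriv ?_
    field_simp
    ring
  rw [intervalIntegral.integral_eq_sub_of_hasDerivAt (fun s _ => hderiv s)
    ((by fun_prop : Continuous _).intervalIntegrable _ _)]
  simp only [sub_self, zero_mul, zero_div, zero_add, zero_sub, Real.sin_zero, mul_zero, Real.cos_zero]
  ring

/-- For `Λ > 0` and `t ≠ 0`, the integral
`∫_{-1/Λ}^{1/Λ} e^{i s t} (|s|/2 - 1/(2Λ)) ds = (cos(t/Λ) - 1)/t²`,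
so the Fourier transform of the cutoff-regularized one-dimensional fundamental solution
`-|s|_Λ/2` is `cos(t/Λ)/t²`, i.e. the cutoff multiplies `1/t²` by `ρ(t/Λ) = cos(t/Λ)`. -/
theorem fourier_cutoff_one_dim (Λ t : ℝ) (hΛ : 0 < Λ) (ht : t ≠ 0) :
    (∫ s in (-(1 / Λ))..(1 / Λ),
        Complex.exp (Complex.I * s * t) * ((|s| / 2 - 1 / (2 * Λ) : ℝ) : ℂ)) =
      ((Real.cos (t / Λ) - 1) / t ^ 2 : ℝ) := by
  refine (integral_cexp_mul_ofReal_of_even (g := fun s => |s| / 2 - 1 / (2 * Λ))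
    ((by fun_prop : Continuous _).intervalIntegrable _ _) (fun s => by simp only [abs_neg]) t).trans ?_
  have hpos : ∫ s in 0..1 / Λ, Real.cos (s * t) * (|s| / 2 - 1 / (2 * Λ)) =
      ∫ s in 0..1 / Λ, Real.cos (s * t) * (s - 1 / Λ) / 2 := by
    refine intervalIntegral.integral_congr fun s hs => ?_
    rw [Set.uIcc_of_le (by positivity)] at hs
    simp only [abs_of_nonneg hs.1]
    ring
  rw [hpos, intervalIntegral.integral_div, integral_cos_mul_mul_sub _ ht, one_div_mul_eq_div]
  ring_nf
end

section
/- Let N ≥ 1, let B₁, B₂ be commuting N×N complex matrices (B₁B₂ = B₂B₁), let s ∈ ℝ, let y ∈ ℝ², and let f : ℝ² → M_N(ℂ) be a smooth matrix-valued function. Define Φ₀(z) = exp(−s(z₁B₁ + z₂B₂)/2) for z ∈ ℝ². Then for every x ∈ ℝ², Φ₀(y − x) · [ −Δ(Φ₀(·−y) f)(x) − s( B₁ ∂₁(Φ₀(·−y) f)(x) + B₂ ∂₂(Φ₀(·−y) f)(x) ) ] = −Δf(x) + (s²/4)(B₁² + B₂²) f(x). That is, conjugating the Laplace-type operator M = −∂_μ∂_μ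 − s B_μ ∂_μ with constant commuting connection components by the Fock–Schwinger gauge factor Φ₀ yields the operator −Δ − s² m with m = −(1/4)(B₁² + B₂²). -/
open MeasureTheory

attribute [local instance] Matrix.normedAddCommGroup Matrix.normedSpace

/-- The Laplacian `Δf(x) = Σᵢ ∂²f/∂xᵢ²(x)` of a matrix-valued function on `ℝ²`. -/
noncomputable def matLaplacian {N : ℕ}
    (f : EuclideanSpace ℝ (Fin 2) → Matrix (Fin N) (Fin N) ℂ)
    (x : EuclideanSpace ℝ (Fin 2)) : Matrix (Fin N) (Fin N) ℂ :=
  ∑ i : Fin 2, fderiv ℝ (fun y => fderiv ℝ f y (EuclideanSpace.single i 1)) x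
    (EuclideanSpace.single i 1)

/-- The partial derivative `∂ᵢ f(x)` of a matrix-valued function on `ℝ²`. -/
noncomputable def matPartialDeriv {N : ℕ} (i : Fin 2)
    (f : EuclideanSpace ℝ (Fin 2) → Matrix (Fin N) (Fin N) ℂ)
    (x : EuclideanSpace ℝ (Fin 2)) : Matrix (Fin N) (Fin N) ℂ :=
  fderiv ℝ f x (EuclideanSpace.single i 1)

section FSAux

open NormedSpace

abbrev MatN (N : ℕ) := Matrix (Fin N) (Fin N) ℂ
abbrev E2 := EuclideanSpace ℝ (Fin 2)
abbrev AN (N : ℕ) := (Fin N → ℂ) →L[ℂ] (Fin N → ℂ)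

variable {N : ℕ}

noncomputable def matCLE (N : ℕ) : MatN N ≃ₐ[ℂ] AN N :=
  Matrix.toLinAlgEquiv'.trans
    (AlgEquiv.ofLinearEquiv LinearMap.toContinuousLinearMap
      (by ext v; rfl)
      (fun x y => by ext v; rfl))

lemma matCLE_symm_continuous :
    Continuous ((matCLE N).symm : AN N → MatN N) :=
  LinearMap.continuous_of_finiteDimensional ((matCLE N).symm.toLinearMap)

lemma matCLE_exp (X : MatN N) :
    matCLE N (exp X) = exp (matCLE N X) := by
  have hc : Continuous ((matCLE N).symm : AN N → MatN N) :=
    LinearMap.continuous_of_finiteDimensional ((matCLE N).symm.toLinearMap)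
  have hsM : HasSum (fun n : ℕ => ((Nat.factorial n : ℝ))⁻¹ • X ^ n)
      ((matCLE N).symm (exp (matCLE N X))) := by
    have hs := expSeries_hasSum_exp (𝕂 := ℝ) (matCLE N X)
    simp_rw [expSeries_apply_eq] at hs
    have hs2 := hs.map ((matCLE N).symm) hc
    have hterm : ((matCLE N).symm ∘ fun n : ℕ => ((Nat.factorial n : ℝ))⁻¹ • (matCLE N X) ^ n)
        = fun n : ℕ => ((Nat.factorial n : ℝ))⁻¹ • X ^ n := by
      funext n
      simp only [Function.comp_apply, map_inv_natCast_smul ((matCLE N).symm) ℝ ℝ,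
        map_pow, (matCLE N).symm_apply_apply]
    rw [hterm] at hs2
    exact hs2
  have h1 : exp X = (matCLE N).symm (exp (matCLE N X)) := by
    rw [exp_eq_tsum ℝ]
    exact hsM.tsum_eq
  rw [h1, (matCLE N).apply_symm_apply]

lemma hasDerivAt_expMat (C : MatN N) (t : ℝ) :
    HasDerivAt (fun u : ℝ => exp (u • C)) (C * exp (t • C)) t := by
  haveI : FiniteDimensional ℝ (AN N) := Module.Finite.trans ℂ _
  have h := hasDerivAt_exp_smul_const' (𝕂 := ℝ) (matCLE N C) t
  let ψ : AN N →L[ℝ] MatN N :=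
    LinearMap.toContinuousLinearMap (((matCLE N).symm.toLinearMap).restrictScalars ℝ)
  have hsm : ∀ u : ℝ, (u • matCLE N C) = matCLE N (u • C) := fun u =>
    (map_smul ((((matCLE N) : MatN N →ₗ[ℂ] AN N)).restrictScalars ℝ) u C).symm
  have hψ : ∀ a : AN N, ψ a = (matCLE N).symm a := fun a => rfl
  have key : ∀ u : ℝ, ψ (exp (u • matCLE N C)) = exp (u • C) := by
    intro u
    rw [hψ, hsm u, ← matCLE_exp, (matCLE N).symm_apply_apply]
  have h2 := (ψ.hasFDerivAt).comp_hasDerivAt t h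
  have hval : ψ (matCLE N C * exp (t • matCLE N C)) = C * exp (t • C) := by
    rw [hψ, hsm t, ← matCLE_exp, ← map_mul, (matCLE N).symm_apply_apply]
  rw [← hval]
  exact h2.congr_of_eventuallyEq (Filter.Eventually.of_forall fun u => (key u).symm)

noncomputable def mulL (N : ℕ) : MatN N →L[ℝ] MatN N →L[ℝ] MatN N :=
  LinearMap.toContinuousLinearMap
    { toFun := fun a => LinearMap.toContinuousLinearMap ((LinearMap.mul ℝ (MatN N)) a)
      map_add' := fun a b => by ext c; simp [add_mul]
      map_smul' := fun r a => by ext c; simp [smul_mul_assoc] }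

lemma mulL_apply (a b : MatN N) : mulL N a b = a * b := rfl

lemma precompR_eval (a : MatN N) (v' : E2 →L[ℝ] MatN N) (w : E2) :
    ((mulL N).precompR E2 a v') w = a * v' w := by
  simp [ContinuousLinearMap.precompR, mulL_apply]
  rfl

lemma precompL_eval (b : MatN N) (u' : E2 →L[ℝ] MatN N) (w : E2) :
    ((mulL N).precompL E2 u' b) w = u' w * b := by
  simp [ContinuousLinearMap.precompL, mulL_apply]
  rfl


lemma proj_single_same (i : Fin 2) :
    (EuclideanSpace.proj i : E2 →L[ℝ] ℝ) (EuclideanSpace.single i (1 : ℝ)) = 1 := by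
  simp [EuclideanSpace.single_apply]

lemma proj_single_ne (i j : Fin 2) (h : j ≠ i) :
    (EuclideanSpace.proj i : E2 →L[ℝ] ℝ) (EuclideanSpace.single j (1 : ℝ)) = 0 := by
  simp [EuclideanSpace.single_apply, Ne.symm h]

lemma final_algebra {N : ℕ} (C₁ C₂ B₁ B₂ G Gi F Q0 Q1 R0 R1 : MatN N) (s : ℝ)
    (hinv : Gi * G = 1)
    (h1 : Commute C₁ Gi) (h2 : Commute C₂ Gi)
    (hb1 : s • B₁ = -(C₁ + C₁)) (hb2 : s • B₂ = -(C₂ + C₂))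
    (hsq1 : C₁ * C₁ = (s ^ 2 / 4 : ℝ) • (B₁ * B₁))
    (hsq2 : C₂ * C₂ = (s ^ 2 / 4 : ℝ) • (B₂ * B₂)) :
    Gi * (-((G * R0 + C₁ * G * Q0 + (C₁ * G * Q0 + C₁ * (C₁ * G) * F)) +
            (G * R1 + C₂ * G * Q1 + (C₂ * G * Q1 + C₂ * (C₂ * G) * F))) -
        (s : ℂ) • (B₁ * (G * Q0 + C₁ * G * F) + B₂ * (G * Q1 + C₂ * G * F))) =
      -(R0 + R1) + ((s ^ 2 / 4 : ℝ) : ℂ) • ((B₁ ^ 2 + B₂ ^ 2) * F) := by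
  have hs : (s : ℂ) • (B₁ * (G * Q0 + C₁ * G * F) + B₂ * (G * Q1 + C₂ * G * F))
      = (s • B₁) * (G * Q0 + C₁ * G * F) + (s • B₂) * (G * Q1 + C₂ * G * F) := by
    rw [Complex.coe_smul, smul_add, smul_mul_assoc, smul_mul_assoc]
  rw [hs, hb1, hb2]
  have hkey : -((G * R0 + C₁ * G * Q0 + (C₁ * G * Q0 + C₁ * (C₁ * G) * F)) +
            (G * R1 + C₂ * G * Q1 + (C₂ * G * Q1 + C₂ * (C₂ * G) * F))) -
        (-(C₁ + C₁) * (G * Q0 + C₁ * G * F) + -(C₂ + C₂) * (G * Q1 + C₂ * G * F))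
      = C₁ * (C₁ * (G * F)) + C₂ * (C₂ * (G * F)) - (G * R0 + G * R1) := by
    noncomm_ring
  rw [hkey]
  have w1 : ∀ Z : MatN N, Gi * (C₁ * Z) = C₁ * (Gi * Z) := fun Z => by
    rw [← mul_assoc, ← h1.eq, mul_assoc]
  have w2 : ∀ Z : MatN N, Gi * (C₂ * Z) = C₂ * (Gi * Z) := fun Z => by
    rw [← mul_assoc, ← h2.eq, mul_assoc]
  have e1 : Gi * (C₁ * (C₁ * (G * F))) = C₁ * (C₁ * F) := by
    rw [w1, w1, ← mul_assoc Gi G F, hinv, one_mul]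
  have e2 : Gi * (C₂ * (C₂ * (G * F))) = C₂ * (C₂ * F) := by
    rw [w2, w2, ← mul_assoc Gi G F, hinv, one_mul]
  have e3 : Gi * (G * R0 + G * R1) = R0 + R1 := by
    rw [mul_add, ← mul_assoc Gi G R0, ← mul_assoc Gi G R1, hinv, one_mul, one_mul]
  rw [mul_sub, mul_add, e1, e2, e3]
  rw [← mul_assoc C₁ C₁ F, ← mul_assoc C₂ C₂ F, hsq1, hsq2, smul_mul_assoc, smul_mul_assoc,
    Complex.coe_smul, pow_two B₁, pow_two B₂, add_mul, smul_add]
  abel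


end FSAux

open NormedSpace

set_option maxHeartbeats 2000000

/-- Fock–Schwinger gauge conjugation of the Sigma-model Laplace-type operator
`M = -∂_μ∂_μ - s B_μ ∂_μ` with constant commuting connection components `B₁, B₂`:
with `Φ₀(z) = exp(-s(z₁B₁ + z₂B₂)/2)`, for every smooth matrix-valued `f` and every `x`,
`Φ₀(y - x) (−Δ(Φ₀(·−y) f)(x) − s(B₁ ∂₁(Φ₀(·−y) f)(x) + B₂ ∂₂(Φ₀(·−y) f)(x)))
  = −Δf(x) + (s²/4)(B₁² + B₂²) f(x)`,
i.e. the conjugated operator is `-Δ - s² m` with `m = -(1/4)(B₁² + B₂²)`. -/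
theorem fock_schwinger_gauge_conjugation (N : ℕ) (hN : 1 ≤ N)
    (B₁ B₂ : Matrix (Fin N) (Fin N) ℂ) (hcomm : B₁ * B₂ = B₂ * B₁) (s : ℝ)
    (y : EuclideanSpace ℝ (Fin 2))
    (f : EuclideanSpace ℝ (Fin 2) → Matrix (Fin N) (Fin N) ℂ) (hf : ContDiff ℝ (⊤ : ℕ∞) f)
    (Φ₀ : EuclideanSpace ℝ (Fin 2) → Matrix (Fin N) (Fin N) ℂ)
    (hΦ₀ : ∀ z, Φ₀ z =
      NormedSpace.exp ((-(s / 2) : ℝ) • (((z 0 : ℝ) : ℂ) • B₁ + ((z 1 : ℝ) : ℂ) • B₂)))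
    (x : EuclideanSpace ℝ (Fin 2)) :
    Φ₀ (y - x) *
        (-(matLaplacian (fun z => Φ₀ (z - y) * f z) x) -
          (s : ℂ) • (B₁ * matPartialDeriv 0 (fun z => Φ₀ (z - y) * f z) x +
            B₂ * matPartialDeriv 1 (fun z => Φ₀ (z - y) * f z) x)) =
      -(matLaplacian f x) + ((s ^ 2 / 4 : ℝ) : ℂ) • ((B₁ ^ 2 + B₂ ^ 2) * f x) := by
  obtain ⟨C₁, hC₁def⟩ : ∃ C : MatN N, C = (-(s / 2) : ℝ) • B₁ := ⟨_, rfl⟩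
  obtain ⟨C₂, hC₂def⟩ : ∃ C : MatN N, C = (-(s / 2) : ℝ) • B₂ := ⟨_, rfl⟩
  have hB : Commute B₁ B₂ := hcomm
  have hCC : Commute C₁ C₂ := by
    rw [hC₁def, hC₂def]; exact (hB.smul_left _).smul_right _
  have hΦ' : ∀ w : E2, Φ₀ w = exp ((w 0) • C₁) * exp ((w 1) • C₂) := by
    intro w
    rw [hΦ₀ w]
    have e1 : ((-(s / 2) : ℝ)) • (((w 0 : ℝ) : ℂ) • B₁ + ((w 1 : ℝ) : ℂ) • B₂)
        = (w 0) • C₁ + (w 1) • C₂ := by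
      rw [Complex.coe_smul, Complex.coe_smul, hC₁def, hC₂def, smul_add,
        smul_comm ((-(s / 2) : ℝ)) (w 0), smul_comm ((-(s / 2) : ℝ)) (w 1)]
    rw [e1,
      Matrix.exp_add_of_commute _ _ ((hCC.smul_left _).smul_right _)]
  have hC1Φ : ∀ w : E2, Commute C₁ (Φ₀ w) := by
    intro w
    rw [hΦ' w]
    exact (((Commute.refl C₁).smul_right _).exp_right).mul_right
      ((hCC.smul_right _).exp_right)
  have hC2Φ : ∀ w : E2, Commute C₂ (Φ₀ w) := by
    intro w
    rw [hΦ' w]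
    exact (((hCC.symm).smul_right _).exp_right).mul_right
      (((Commute.refl C₂).smul_right _).exp_right)
  have hexp_inv : ∀ (C : MatN N) (a : ℝ), exp (a • C) * exp ((-a) • C) = 1 := by
    intro C a
    rw [← Matrix.exp_add_of_commute _ _ (((Commute.refl C).smul_left a).smul_right (-a)),
      neg_smul, add_neg_cancel, exp_zero]
  have hinv : Φ₀ (y - x) * Φ₀ (x - y) = 1 := by
    rw [hΦ' (y - x), hΦ' (x - y)]
    have ha : (x - y) 0 = -((y - x) 0) := by
      show x 0 - y 0 = -(y 0 - x 0); ring
    have hb : (x - y) 1 = -((y - x) 1) := by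
      show x 1 - y 1 = -(y 1 - x 1); ring
    rw [ha, hb]
    have hcmm : Commute (exp (((y - x) 1) • C₂)) (exp ((-((y - x) 0)) • C₁)) :=
      (((hCC.symm.smul_left _).smul_right _).exp_left).exp_right
    calc exp (((y - x) 0) • C₁) * exp (((y - x) 1) • C₂) *
          (exp ((-((y - x) 0)) • C₁) * exp ((-((y - x) 1)) • C₂))
        = exp (((y - x) 0) • C₁) * ((exp (((y - x) 1) • C₂) *
            exp ((-((y - x) 0)) • C₁)) * exp ((-((y - x) 1)) • C₂)) := by
          noncomm_ring
      _ = exp (((y - x) 0) • C₁) * ((exp ((-((y - x) 0)) • C₁) *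
            exp (((y - x) 1) • C₂)) * exp ((-((y - x) 1)) • C₂)) := by
          rw [hcmm.eq]
      _ = (exp (((y - x) 0) • C₁) * exp ((-((y - x) 0)) • C₁)) *
            (exp (((y - x) 1) • C₂) * exp ((-((y - x) 1)) • C₂)) := by
          noncomm_ring
      _ = 1 := by rw [hexp_inv C₁, hexp_inv C₂, one_mul]
  -- derivative of the gauge factor
  have keyderiv : ∀ (C : MatN N) (i : Fin 2) (z : E2), HasFDerivAt
      (fun w : E2 => exp ((w i - y i) • C))
      (((EuclideanSpace.proj i : E2 →L[ℝ] ℝ)).smulRight (C * exp ((z i - y i) • C))) z := by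
    intro C i z
    have hd : HasDerivAt (fun t : ℝ => exp ((t - y i) • C))
        (C * exp ((z i - y i) • C)) (z i) := by
      have := HasDerivAt.scomp_of_eq (𝕜 := ℝ) (z i) (hasDerivAt_expMat C (z i - y i))
        ((hasDerivAt_id (z i)).sub_const (y i)) (by simp)
      simp only [one_smul, id] at this
      exact this
    have hp : HasFDerivAt _ (EuclideanSpace.proj i : E2 →L[ℝ] ℝ) z :=
      (EuclideanSpace.proj i : E2 →L[ℝ] ℝ).hasFDerivAt
    have hcomp := HasFDerivAt.comp (𝕜 := ℝ) z hd.hasFDerivAt hp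
    convert hcomp using 1
    all_goals rfl
  have hg : ∀ z : E2, HasFDerivAt (fun w : E2 => Φ₀ (w - y))
      (((EuclideanSpace.proj (0 : Fin 2) : E2 →L[ℝ] ℝ)).smulRight (C₁ * Φ₀ (z - y)) +
        ((EuclideanSpace.proj (1 : Fin 2) : E2 →L[ℝ] ℝ)).smulRight (C₂ * Φ₀ (z - y))) z := by
    intro z
    have hu := keyderiv C₁ 0 z
    have hv := keyderiv C₂ 1 z
    have hmul := (mulL N).hasFDerivAt_of_bilinear hu hv
    have heq : (fun w : E2 => mulL N (exp ((w 0 - y 0) • C₁)) (exp ((w 1 - y 1) • C₂)))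
        = fun w : E2 => Φ₀ (w - y) := by
      funext w
      rw [mulL_apply, hΦ' (w - y)]
      rfl
    replace hmul := hmul.congr_of_eventuallyEq
      (Filter.Eventually.of_forall fun w => (congrFun heq w).symm)
    have hΦz : Φ₀ (z - y) = exp ((z 0 - y 0) • C₁) * exp ((z 1 - y 1) • C₂) := hΦ' (z - y)
    have hcm : exp ((z 0 - y 0) • C₁) * C₂ = C₂ * exp ((z 0 - y 0) • C₁) :=
      (((hCC.symm).smul_right _).exp_right).eq.symm
    refine hmul.congr_fderiv (Eq.symm ?_)
    refine ContinuousLinearMap.ext fun w => ?_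
    show (EuclideanSpace.proj 0 : E2 →L[ℝ] ℝ) w • (C₁ * Φ₀ (z - y))
        + (EuclideanSpace.proj 1 : E2 →L[ℝ] ℝ) w • (C₂ * Φ₀ (z - y))
      = exp ((z 0 - y 0) • C₁) * ((EuclideanSpace.proj 1 : E2 →L[ℝ] ℝ) w
          • (C₂ * exp ((z 1 - y 1) • C₂)))
        + ((EuclideanSpace.proj 0 : E2 →L[ℝ] ℝ) w • (C₁ * exp ((z 0 - y 0) • C₁)))
          * exp ((z 1 - y 1) • C₂)
    rw [hΦz]
    rw [mul_smul_comm, smul_mul_assoc]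
    rw [show exp ((z 0 - y 0) • C₁) * (C₂ * exp ((z 1 - y 1) • C₂))
        = C₂ * (exp ((z 0 - y 0) • C₁) * exp ((z 1 - y 1) • C₂)) by
      rw [← mul_assoc, hcm, mul_assoc]]
    rw [show C₁ * exp ((z 0 - y 0) • C₁) * exp ((z 1 - y 1) • C₂)
        = C₁ * (exp ((z 0 - y 0) • C₁) * exp ((z 1 - y 1) • C₂)) by rw [mul_assoc]]
    abel
  -- derivatives of f
  have hfd : ∀ z : E2, HasFDerivAt f (fderiv ℝ f z) z := fun z =>
    (hf.differentiable (by simp) z).hasFDerivAt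
  have hq0cd : ContDiff ℝ (⊤ : ℕ∞) (fun z : E2 => fderiv ℝ f z (EuclideanSpace.single 0 1)) :=
    (hf.fderiv_right (by simp)).clm_apply contDiff_const
  have hq1cd : ContDiff ℝ (⊤ : ℕ∞) (fun z : E2 => fderiv ℝ f z (EuclideanSpace.single 1 1)) :=
    (hf.fderiv_right (by simp)).clm_apply contDiff_const
  have hq0 : ∀ z : E2, HasFDerivAt (fun w : E2 => fderiv ℝ f w (EuclideanSpace.single 0 1))
      (fderiv ℝ (fun w : E2 => fderiv ℝ f w (EuclideanSpace.single 0 1)) z) z := fun z =>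
    (hq0cd.differentiable (by simp) z).hasFDerivAt
  have hq1 : ∀ z : E2, HasFDerivAt (fun w : E2 => fderiv ℝ f w (EuclideanSpace.single 1 1))
      (fderiv ℝ (fun w : E2 => fderiv ℝ f w (EuclideanSpace.single 1 1)) z) z := fun z =>
    (hq1cd.differentiable (by simp) z).hasFDerivAt
  -- first partial derivatives of the gauged function
  have hP0 : ∀ z : E2, fderiv ℝ (fun w : E2 => Φ₀ (w - y) * f w) z (EuclideanSpace.single 0 1)
      = Φ₀ (z - y) * fderiv ℝ f z (EuclideanSpace.single 0 1) + C₁ * Φ₀ (z - y) * f z := by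
    intro z
    have h' : HasFDerivAt (fun w : E2 => Φ₀ (w - y) * f w) _ z :=
      (mulL N).hasFDerivAt_of_bilinear (hg z) (hfd z)
    rw [h'.fderiv]
    show Φ₀ (z - y) * fderiv ℝ f z (EuclideanSpace.single 0 1) + ((EuclideanSpace.proj 0 : E2 →L[ℝ] ℝ) (EuclideanSpace.single 0 1) • (C₁ * Φ₀ (z - y)) + (EuclideanSpace.proj 1 : E2 →L[ℝ] ℝ) (EuclideanSpace.single 0 1) • (C₂ * Φ₀ (z - y))) * f z = _
    rw [proj_single_same, proj_single_ne 1 0 (by decide), one_smul, zero_smul, add_zero]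
  have hP1 : ∀ z : E2, fderiv ℝ (fun w : E2 => Φ₀ (w - y) * f w) z (EuclideanSpace.single 1 1)
      = Φ₀ (z - y) * fderiv ℝ f z (EuclideanSpace.single 1 1) + C₂ * Φ₀ (z - y) * f z := by
    intro z
    have h' : HasFDerivAt (fun w : E2 => Φ₀ (w - y) * f w) _ z :=
      (mulL N).hasFDerivAt_of_bilinear (hg z) (hfd z)
    rw [h'.fderiv]
    show Φ₀ (z - y) * fderiv ℝ f z (EuclideanSpace.single 1 1) + ((EuclideanSpace.proj 0 : E2 →L[ℝ] ℝ) (EuclideanSpace.single 1 1) • (C₁ * Φ₀ (z - y)) + (EuclideanSpace.proj 1 : E2 →L[ℝ] ℝ) (EuclideanSpace.single 1 1) • (C₂ * Φ₀ (z - y))) * f z = _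
    rw [proj_single_same, proj_single_ne 0 1 (by decide), zero_smul, one_smul, zero_add]
  -- second derivatives
  have hD0 : fderiv ℝ (fun z : E2 => Φ₀ (z - y) * fderiv ℝ f z (EuclideanSpace.single 0 1)
        + C₁ * Φ₀ (z - y) * f z) x (EuclideanSpace.single 0 1)
      = (Φ₀ (x - y) * fderiv ℝ (fun w : E2 => fderiv ℝ f w (EuclideanSpace.single 0 1)) x
          (EuclideanSpace.single 0 1)
        + C₁ * Φ₀ (x - y) * fderiv ℝ f x (EuclideanSpace.single 0 1))
        + (C₁ * Φ₀ (x - y) * fderiv ℝ f x (EuclideanSpace.single 0 1)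
        + C₁ * (C₁ * Φ₀ (x - y)) * f x) := by
    have hU : HasFDerivAt (fun w : E2 => Φ₀ (w - y) * fderiv ℝ f w (EuclideanSpace.single 0 1))
        _ x := (mulL N).hasFDerivAt_of_bilinear (hg x) (hq0 x)
    have hTa : HasFDerivAt (fun w : E2 => C₁ * Φ₀ (w - y)) _ x :=
      ((mulL N) C₁).hasFDerivAt.comp x (hg x)
    have hT : HasFDerivAt (fun w : E2 => C₁ * Φ₀ (w - y) * f w) _ x :=
      (mulL N).hasFDerivAt_of_bilinear hTa (hfd x)
    have h' : HasFDerivAt (fun z : E2 => Φ₀ (z - y) * fderiv ℝ f z (EuclideanSpace.single 0 1)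
        + C₁ * Φ₀ (z - y) * f z) _ x := hU.add hT
    rw [h'.fderiv]
    show Φ₀ (x - y) * fderiv ℝ (fun w : E2 => fderiv ℝ f w (EuclideanSpace.single 0 1)) x (EuclideanSpace.single 0 1)
        + ((EuclideanSpace.proj 0 : E2 →L[ℝ] ℝ) (EuclideanSpace.single 0 1) • (C₁ * Φ₀ (x - y)) + (EuclideanSpace.proj 1 : E2 →L[ℝ] ℝ) (EuclideanSpace.single 0 1) • (C₂ * Φ₀ (x - y))) * fderiv ℝ f x (EuclideanSpace.single 0 1)
        + (C₁ * Φ₀ (x - y) * fderiv ℝ f x (EuclideanSpace.single 0 1) + C₁ * ((EuclideanSpace.proj 0 : E2 →L[ℝ] ℝ) (EuclideanSpace.single 0 1) • (C₁ * Φ₀ (x - y)) + (EuclideanSpace.proj 1 : E2 →L[ℝ] ℝ) (EuclideanSpace.single 0 1) • (C₂ * Φ₀ (x - y))) * f x) = _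
    rw [proj_single_same, proj_single_ne 1 0 (by decide), one_smul, zero_smul, add_zero]
  have hD1 : fderiv ℝ (fun z : E2 => Φ₀ (z - y) * fderiv ℝ f z (EuclideanSpace.single 1 1)
        + C₂ * Φ₀ (z - y) * f z) x (EuclideanSpace.single 1 1)
      = (Φ₀ (x - y) * fderiv ℝ (fun w : E2 => fderiv ℝ f w (EuclideanSpace.single 1 1)) x
          (EuclideanSpace.single 1 1)
        + C₂ * Φ₀ (x - y) * fderiv ℝ f x (EuclideanSpace.single 1 1))
        + (C₂ * Φ₀ (x - y) * fderiv ℝ f x (EuclideanSpace.single 1 1)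
        + C₂ * (C₂ * Φ₀ (x - y)) * f x) := by
    have hU : HasFDerivAt (fun w : E2 => Φ₀ (w - y) * fderiv ℝ f w (EuclideanSpace.single 1 1))
        _ x := (mulL N).hasFDerivAt_of_bilinear (hg x) (hq1 x)
    have hTa : HasFDerivAt (fun w : E2 => C₂ * Φ₀ (w - y)) _ x :=
      ((mulL N) C₂).hasFDerivAt.comp x (hg x)
    have hT : HasFDerivAt (fun w : E2 => C₂ * Φ₀ (w - y) * f w) _ x :=
      (mulL N).hasFDerivAt_of_bilinear hTa (hfd x)
    have h' : HasFDerivAt (fun z : E2 => Φ₀ (z - y) * fderiv ℝ f z (EuclideanSpace.single 1 1)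
        + C₂ * Φ₀ (z - y) * f z) _ x := hU.add hT
    rw [h'.fderiv]
    show Φ₀ (x - y) * fderiv ℝ (fun w : E2 => fderiv ℝ f w (EuclideanSpace.single 1 1)) x (EuclideanSpace.single 1 1)
        + ((EuclideanSpace.proj 0 : E2 →L[ℝ] ℝ) (EuclideanSpace.single 1 1) • (C₁ * Φ₀ (x - y)) + (EuclideanSpace.proj 1 : E2 →L[ℝ] ℝ) (EuclideanSpace.single 1 1) • (C₂ * Φ₀ (x - y))) * fderiv ℝ f x (EuclideanSpace.single 1 1)
        + (C₂ * Φ₀ (x - y) * fderiv ℝ f x (EuclideanSpace.single 1 1) + C₂ * ((EuclideanSpace.proj 0 : E2 →L[ℝ] ℝ) (EuclideanSpace.single 1 1) • (C₁ * Φ₀ (x - y)) + (EuclideanSpace.proj 1 : E2 →L[ℝ] ℝ) (EuclideanSpace.single 1 1) • (C₂ * Φ₀ (x - y))) * f x) = _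
    rw [proj_single_same, proj_single_ne 0 1 (by decide), zero_smul, one_smul, zero_add]
  -- scalar identities
  have hb1 : s • B₁ = -(C₁ + C₁) := by rw [hC₁def]; module
  have hb2 : s • B₂ = -(C₂ + C₂) := by rw [hC₂def]; module
  have hsq1 : C₁ * C₁ = (s ^ 2 / 4 : ℝ) • (B₁ * B₁) := by
    rw [hC₁def, smul_mul_smul_comm]
    congr 1
    ring
  have hsq2 : C₂ * C₂ = (s ^ 2 / 4 : ℝ) • (B₂ * B₂) := by
    rw [hC₂def, smul_mul_smul_comm]
    congr 1
    ring
  -- assemble the Laplacians and partial derivatives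
  have hmpd0 : matPartialDeriv 0 (fun z => Φ₀ (z - y) * f z) x
      = Φ₀ (x - y) * fderiv ℝ f x (EuclideanSpace.single 0 1) + C₁ * Φ₀ (x - y) * f x := hP0 x
  have hmpd1 : matPartialDeriv 1 (fun z => Φ₀ (z - y) * f z) x
      = Φ₀ (x - y) * fderiv ℝ f x (EuclideanSpace.single 1 1) + C₂ * Φ₀ (x - y) * f x := hP1 x
  have hfun0 : (fun z : E2 => fderiv ℝ (fun w : E2 => Φ₀ (w - y) * f w) z (EuclideanSpace.single 0 1))
      = fun z : E2 => Φ₀ (z - y) * fderiv ℝ f z (EuclideanSpace.single 0 1)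
          + C₁ * Φ₀ (z - y) * f z := funext hP0
  have hfun1 : (fun z : E2 => fderiv ℝ (fun w : E2 => Φ₀ (w - y) * f w) z (EuclideanSpace.single 1 1))
      = fun z : E2 => Φ₀ (z - y) * fderiv ℝ f z (EuclideanSpace.single 1 1)
          + C₂ * Φ₀ (z - y) * f z := funext hP1
  have hlaph : matLaplacian (fun z => Φ₀ (z - y) * f z) x
      = ((Φ₀ (x - y) * fderiv ℝ (fun w : E2 => fderiv ℝ f w (EuclideanSpace.single 0 1)) x
            (EuclideanSpace.single 0 1)
          + C₁ * Φ₀ (x - y) * fderiv ℝ f x (EuclideanSpace.single 0 1))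
          + (C₁ * Φ₀ (x - y) * fderiv ℝ f x (EuclideanSpace.single 0 1)
          + C₁ * (C₁ * Φ₀ (x - y)) * f x))
        + ((Φ₀ (x - y) * fderiv ℝ (fun w : E2 => fderiv ℝ f w (EuclideanSpace.single 1 1)) x
            (EuclideanSpace.single 1 1)
          + C₂ * Φ₀ (x - y) * fderiv ℝ f x (EuclideanSpace.single 1 1))
          + (C₂ * Φ₀ (x - y) * fderiv ℝ f x (EuclideanSpace.single 1 1)
          + C₂ * (C₂ * Φ₀ (x - y)) * f x)) := by
    simp only [matLaplacian, Fin.sum_univ_two]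
    rw [hfun0, hfun1, hD0, hD1]
  have hlapf : matLaplacian f x
      = fderiv ℝ (fun w : E2 => fderiv ℝ f w (EuclideanSpace.single 0 1)) x
          (EuclideanSpace.single 0 1)
        + fderiv ℝ (fun w : E2 => fderiv ℝ f w (EuclideanSpace.single 1 1)) x
          (EuclideanSpace.single 1 1) := by
    simp only [matLaplacian, Fin.sum_univ_two]
  rw [hlaph, hlapf, hmpd0, hmpd1]
  exact final_algebra C₁ C₂ B₁ B₂ (Φ₀ (x - y)) (Φ₀ (y - x)) (f x)
    (fderiv ℝ f x (EuclideanSpace.single 0 1)) (fderiv ℝ f x (EuclideanSpace.single 1 1))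
    (fderiv ℝ (fun w : E2 => fderiv ℝ f w (EuclideanSpace.single 0 1)) x
      (EuclideanSpace.single 0 1))
    (fderiv ℝ (fun w : E2 => fderiv ℝ f w (EuclideanSpace.single 1 1)) x
      (EuclideanSpace.single 1 1)) s hinv (hC1Φ (y - x)) (hC2Φ (y - x)) hb1 hb2 hsq1 hsq2
end
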